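/- arXiv:1909.09314 — 4 statements merged into one kernel-verified Lean document; each statement's English description precedes it below -/
import Mathlib

section
/- Let S and A be finite nonempty types, T ≥ 1 a horizon, g : S → A → S a deterministic transition function, and f : S → A → ℝ a reward function. Define soft value functions backward by V_{T+1}(s) = 0, Q_t(s,a) = f(s,a) + V_{t+1}(g(s,a)), and V_t(s) = log ∑_{a∈A} exp(Q_t(s,a)) for t = T, T−1, …, 1, and the softmax policy π_t(a|s) = exp(Q_t(s,a) − V_t(s)). Then for every initial state s₁ ∈ S and every action sequence a₁, …, a_T ∈ A, with induced states s_{t+1} = g(s_t, a_t), one has ∏_{t=1}^T π_t(a_t|s_t) = exp( ∑_{t=1}^T f(s_t, a_t) − V₁(s₁) ). -/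
open Finset

/- Along the trajectory, `π_t(a_t|s_t) = exp (f(s_t,a_t) + V_{t+1}(s_{t+1}) − V_t(s_t))`, so the
product over `t` is the exponential of a sum in which the values `V_t(s_t)` telescope, leaving
`V_{T+1}(s_{T+1}) − V_1(s_1) = −V_1(s_1)`. -/

theorem prod_Icc_eq_exp_sum_add_sub {p r v : ℕ → ℝ} {T : ℕ}
    (h : ∀ t ∈ Icc 1 T, p t = Real.exp (r t + (v (t + 1) - v t))) :
    ∏ t ∈ Icc 1 T, p t = Real.exp (∑ t ∈ Icc 1 T, r t + (v (T + 1) - v 1)) := by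
  rw [prod_congr rfl h, ← Real.exp_sum, sum_add_distrib, ← Ico_add_one_right_eq_Icc,
    sum_Ico_sub v (by omega)]

theorem softmax_policy_traj_prob_general {S A : Type*}
    (T : ℕ) (g : S → A → S) (f : S → A → ℝ)
    (V : ℕ → S → ℝ) (Q : ℕ → S → A → ℝ) (π : ℕ → S → A → ℝ)
    (hVend : ∀ s, V (T + 1) s = 0)
    (hQ : ∀ t, 1 ≤ t → t ≤ T → ∀ s a, Q t s a = f s a + V (t + 1) (g s a))
    (hπ : ∀ t, 1 ≤ t → t ≤ T → ∀ s a, π t s a = Real.exp (Q t s a - V t s))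
    (s : ℕ → S) (a : ℕ → A)
    (hs : ∀ t, 1 ≤ t → t ≤ T → s (t + 1) = g (s t) (a t)) :
    ∏ t ∈ Finset.Icc 1 T, π t (s t) (a t)
      = Real.exp ((∑ t ∈ Finset.Icc 1 T, f (s t) (a t)) - V 1 (s 1)) := by
  have hπ_traj : ∀ t ∈ Icc 1 T, π t (s t) (a t)
      = Real.exp (f (s t) (a t) + (V (t + 1) (s (t + 1)) - V t (s t))) := by
    intro t ht
    obtain ⟨ht1, htT⟩ := mem_Icc.mp ht
    rw [hπ t ht1 htT, hQ t ht1 htT, hs t ht1 htT, add_sub_assoc]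
  rw [prod_Icc_eq_exp_sum_add_sub (v := fun t ↦ V t (s t)) hπ_traj, hVend, zero_sub,
    ← sub_eq_add_neg]

/-- In a finite-horizon deterministic MDP, with soft value functions defined
backward by `V_{T+1} = 0`, `Q_t(s,a) = f(s,a) + V_{t+1}(g(s,a))`,
`V_t(s) = log ∑_a exp (Q_t(s,a))`, and softmax policy
`π_t(a|s) = exp (Q_t(s,a) − V_t(s))`, the probability of any action sequence
along its induced trajectory telescopes:
`∏_{t=1}^T π_t(a_t|s_t) = exp (∑_{t=1}^T f(s_t,a_t) − V₁(s₁))`. -/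
theorem softmax_policy_traj_prob {S A : Type*}
    [Fintype S] [Fintype A] [Nonempty S] [Nonempty A]
    (T : ℕ) (hT : 1 ≤ T) (g : S → A → S) (f : S → A → ℝ)
    (V : ℕ → S → ℝ) (Q : ℕ → S → A → ℝ) (π : ℕ → S → A → ℝ)
    (hVend : ∀ s, V (T + 1) s = 0)
    (hQ : ∀ t, 1 ≤ t → t ≤ T → ∀ s a, Q t s a = f s a + V (t + 1) (g s a))
    (hV : ∀ t, 1 ≤ t → t ≤ T → ∀ s, V t s = Real.log (∑ a, Real.exp (Q t s a)))
    (hπ : ∀ t, 1 ≤ t → t ≤ T → ∀ s a, π t s a = Real.exp (Q t s a - V t s))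
    (s : ℕ → S) (a : ℕ → A)
    (hs : ∀ t, 1 ≤ t → t ≤ T → s (t + 1) = g (s t) (a t)) :
    ∏ t ∈ Finset.Icc 1 T, π t (s t) (a t)
      = Real.exp ((∑ t ∈ Finset.Icc 1 T, f (s t) (a t)) - V 1 (s 1)) :=
  softmax_policy_traj_prob_general T g f V Q π hVend hQ hπ s a hs
end

section
/- Let S and A be finite nonempty types, T ≥ 1 a horizon, g : S → A → S a deterministic transition function, and f : S → A → ℝ a reward function. Define V_{T+1}(s) = 0, Q_t(s,a) = f(s,a) + V_{t+1}(g(s,a)), V_t(s) = log ∑_{a∈A} exp(Q_t(s,a)), and the softmax policy π_t(a|s) = exp(Q_t(s,a) − V_t(s)). Fix an initial state s₁ ∈ S. Then the map sending an action sequence (a₁,…,a_T) ∈ A^T (with induced states s_{t+1} = g(s_t, a_t)) to ∏_{t=1}^T π_t(a_t|s_t) is a probability mass function on A^T, and it equals the maximum-entropy trajectory distribution: ∏_{t=1}^T π_t(a_t|s_t) = exp(∑_{t=1}^T f(s_t,a_t)) / ∑_{(a'₁,…,a'_T)∈A^T} exp(∑_{t=1}^T f(s'_t,a'_t)), where the denominator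 sum is over all action sequences with their induced states s'_{t+1} = g(s'_t, a'_t) starting from s'₁ = s₁. -/
/-!
Along the trajectory of an action sequence, the policy factor at time `t` equals
`exp (f(s_t,a_t) + V_{t+1}(s_{t+1}) - V_t(s_t))`, so the product over `t` telescopes to
`exp (∑_t f(s_t,a_t) - V_1(s_1))` since `V_{T+1} = 0`. Splitting off the first action and
unfolding the soft Bellman recursion shows that the partition function
`∑_{a'} exp (∑_t f(s'_t,a'_t))` equals `exp (V_1(s_1))`; this gives both the normalisation
and the Boltzmann form.
-/

open BigOperators

/-- The state sequence induced from initial state `s₁` by deterministic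
dynamics `g` and actions `a`, with 1-based time: `s 1 = s₁` and
`s (t+1) = g (s t) (a t)` for `t ≥ 1` (the value at time `0` is a dummy). -/
def stateSeq {S A : Type*} (g : S → A → S) (s₁ : S) (a : ℕ → A) : ℕ → S
  | 0 => s₁
  | 1 => s₁
  | (t + 2) => g (stateSeq g s₁ a (t + 1)) (a (t + 1))

/-- Extension of a finite action sequence `a₁, …, a_T` (1-based) to `ℕ → A`. -/
noncomputable def actOf {A : Type*} [Nonempty A] {T : ℕ} (v : Fin T → A) : ℕ → A :=
  fun t => if h : t - 1 < T then v ⟨t - 1, h⟩ else Classical.arbitrary A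

namespace SoftBellman

open Finset Real

variable {S A : Type*} (g : S → A → S) (f : S → A → ℝ)

/-- Soft value with `k` steps to go: the paper's `V_t` is `softValue (T + 1 - t)`. -/
noncomputable def softValue [Fintype A] : ℕ → S → ℝ
  | 0, _ => 0
  | k + 1, s => log (∑ a, exp (f s a + softValue k (g s a)))

def pathReward : (k : ℕ) → S → (Fin k → A) → ℝ
  | 0, _, _ => 0
  | k + 1, s, v => f s (v 0) + pathReward k (g s (v 0)) (Fin.tail v)

theorem pathReward_cons (k : ℕ) (s : S) (a : A) (w : Fin k → A) :
    pathReward g f (k + 1) s (Fin.cons a w) = f s a + pathReward g f k (g s a) w := by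
  simp only [pathReward, Fin.cons_zero, Fin.tail_cons]

theorem exp_softValue_succ [Fintype A] [Nonempty A] (k : ℕ) (s : S) :
    exp (softValue g f (k + 1) s) = ∑ a, exp (f s a + softValue g f k (g s a)) :=
  exp_log (sum_pos (fun _ _ => exp_pos _) univ_nonempty)

theorem sum_exp_pathReward [Fintype A] [Nonempty A] (k : ℕ) (s : S) :
    ∑ v : Fin k → A, exp (pathReward g f k s v) = exp (softValue g f k s) := by
  induction k generalizing s with
  | zero => simp [pathReward, softValue]
  | succ k ih =>
    rw [← (Fin.consEquiv fun _ => A).sum_comp, Fintype.sum_prod_type, exp_softValue_succ]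
    refine sum_congr rfl fun a _ => ?_
    rw [exp_add, ← ih, mul_sum]
    refine sum_congr rfl fun w _ => ?_
    rw [← exp_add, ← pathReward_cons]
    rfl

theorem stateSeq_one (s : S) (a : ℕ → A) : stateSeq g s a 1 = s := rfl

theorem stateSeq_succ (s : S) (a : ℕ → A) {t : ℕ} (ht : 1 ≤ t) :
    stateSeq g s a (t + 1) = g (stateSeq g s a t) (a t) := by
  obtain ⟨t, rfl⟩ := Nat.exists_eq_add_of_le' ht
  rfl

theorem stateSeq_succ_eq_stateSeq_shift (s : S) (a : ℕ → A) {t : ℕ} (ht : 1 ≤ t) :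
    stateSeq g s a (t + 1) = stateSeq g (g s (a 1)) (fun n => a (n + 1)) t := by
  induction t, ht using Nat.le_induction with
  | base => rfl
  | succ t ht ih => rw [stateSeq_succ g s a (by omega), ih, stateSeq_succ _ _ _ ht]

theorem sum_range_reward_stateSeq (k : ℕ) (s : S) (a : ℕ → A) :
    ∑ i ∈ range k, f (stateSeq g s a (i + 1)) (a (i + 1)) =
      pathReward g f k s (fun j => a (j + 1)) := by
  induction k generalizing s a with
  | zero => rfl
  | succ k ih =>
    rw [sum_range_succ', add_comm]
    simp only [stateSeq_succ_eq_stateSeq_shift g s a (Nat.le_add_left 1 _), ih]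
    rfl

theorem actOf_succ [Nonempty A] {T : ℕ} (v : Fin T → A) (j : Fin T) :
    actOf v (j + 1) = v j := by
  simp [actOf]

theorem sum_Icc_reward_stateSeq_actOf [Nonempty A] (T : ℕ) (s : S) (v : Fin T → A) :
    ∑ t ∈ Icc 1 T, f (stateSeq g s (actOf v) t) (actOf v t) = pathReward g f T s v := by
  have h := sum_range_reward_stateSeq g f T s (actOf v)
  rw [range_eq_Ico, sum_Ico_add' (fun t => f (stateSeq g s (actOf v) t) (actOf v t)),
    zero_add, Ico_add_one_right_eq_Icc] at h
  simpa only [actOf_succ] using h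

theorem sum_exp_reward_stateSeq_actOf [Fintype A] [Nonempty A] (T : ℕ) (s : S) :
    ∑ v : Fin T → A, exp (∑ t ∈ Icc 1 T, f (stateSeq g s (actOf v) t) (actOf v t)) =
      exp (softValue g f T s) := by
  simp only [sum_Icc_reward_stateSeq_actOf, sum_exp_pathReward]

theorem eq_softValue_of_bellman [Fintype A] (T : ℕ) (V : ℕ → S → ℝ)
    (hVend : ∀ s, V (T + 1) s = 0)
    (hV : ∀ t, 1 ≤ t → t ≤ T → ∀ s,
      V t s = log (∑ a, exp (f s a + V (t + 1) (g s a))))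
    {d : ℕ} (hd : d ≤ T) : V (T + 1 - d) = softValue g f d := by
  induction d with
  | zero => exact funext hVend
  | succ d ih =>
    funext s
    rw [show T + 1 - (d + 1) = T - d by omega, hV (T - d) (by omega) (by omega),
      show T - d + 1 = T + 1 - d by omega, ih (by omega)]
    rfl

theorem prod_Icc_exp_telescope (T : ℕ) (r h : ℕ → ℝ) :
    ∏ t ∈ Icc 1 T, exp (r t + h (t + 1) - h t) =
      exp (∑ t ∈ Icc 1 T, r t + h (T + 1) - h 1) := by
  simp only [← exp_sum, add_sub_assoc, sum_add_distrib]
  rw [← Ico_add_one_right_eq_Icc, sum_Ico_sub _ (by omega)]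

theorem prod_policy_stateSeq (T : ℕ) (V : ℕ → S → ℝ) (p : ℕ → S → A → ℝ)
    (hVend : ∀ s, V (T + 1) s = 0)
    (hp : ∀ t, 1 ≤ t → t ≤ T → ∀ s a, p t s a = exp (f s a + V (t + 1) (g s a) - V t s))
    (s₁ : S) (a : ℕ → A) :
    ∏ t ∈ Icc 1 T, p t (stateSeq g s₁ a t) (a t) =
      exp (∑ t ∈ Icc 1 T, f (stateSeq g s₁ a t) (a t) - V 1 s₁) := by
  calc ∏ t ∈ Icc 1 T, p t (stateSeq g s₁ a t) (a t)
      = ∏ t ∈ Icc 1 T, exp (f (stateSeq g s₁ a t) (a t) +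
          V (t + 1) (stateSeq g s₁ a (t + 1)) - V t (stateSeq g s₁ a t)) := by
        refine prod_congr rfl fun t ht => ?_
        obtain ⟨h1, h2⟩ := mem_Icc.1 ht
        rw [hp t h1 h2, stateSeq_succ g s₁ a h1]
    _ = _ := by
        rw [prod_Icc_exp_telescope T (fun t => f (stateSeq g s₁ a t) (a t))
          (fun t => V t (stateSeq g s₁ a t)), hVend, stateSeq_one, add_zero]

end SoftBellman

open SoftBellman

theorem softmax_policy_is_maxent_traj_distribution_general {S A : Type*}
    [Fintype A] [Nonempty A]
    (T : ℕ) (g : S → A → S) (f : S → A → ℝ)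
    (V : ℕ → S → ℝ) (Q : ℕ → S → A → ℝ) (π : ℕ → S → A → ℝ)
    (hVend : ∀ s, V (T + 1) s = 0)
    (hQ : ∀ t, 1 ≤ t → t ≤ T → ∀ s a, Q t s a = f s a + V (t + 1) (g s a))
    (hV : ∀ t, 1 ≤ t → t ≤ T → ∀ s, V t s = Real.log (∑ a, Real.exp (Q t s a)))
    (hπ : ∀ t, 1 ≤ t → t ≤ T → ∀ s a, π t s a = Real.exp (Q t s a - V t s))
    (s₁ : S) :
    (∀ v : Fin T → A,
        0 ≤ ∏ t ∈ Finset.Icc 1 T,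
          π t (stateSeq g s₁ (actOf v) t) (actOf v t)) ∧
    (∑ v : Fin T → A,
        ∏ t ∈ Finset.Icc 1 T,
          π t (stateSeq g s₁ (actOf v) t) (actOf v t)) = 1 ∧
    (∀ v : Fin T → A,
        ∏ t ∈ Finset.Icc 1 T,
          π t (stateSeq g s₁ (actOf v) t) (actOf v t)
          = Real.exp (∑ t ∈ Finset.Icc 1 T,
              f (stateSeq g s₁ (actOf v) t) (actOf v t))
            / ∑ v' : Fin T → A,
                Real.exp (∑ t ∈ Finset.Icc 1 T,
                  f (stateSeq g s₁ (actOf v') t) (actOf v' t))) := by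
  have hbellman : ∀ t, 1 ≤ t → t ≤ T → ∀ s,
      V t s = Real.log (∑ a, Real.exp (f s a + V (t + 1) (g s a))) := fun t h1 h2 s => by
    simp only [hV t h1 h2, hQ t h1 h2]
  have hpolicy : ∀ t, 1 ≤ t → t ≤ T → ∀ s a,
      π t s a = Real.exp (f s a + V (t + 1) (g s a) - V t s) := fun t h1 h2 s a => by
    rw [hπ t h1 h2, hQ t h1 h2]
  have hZ : ∑ v : Fin T → A, Real.exp (∑ t ∈ Finset.Icc 1 T,
      f (stateSeq g s₁ (actOf v) t) (actOf v t)) = Real.exp (V 1 s₁) := by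
    rw [sum_exp_reward_stateSeq_actOf, ← eq_softValue_of_bellman g f T V hVend hbellman le_rfl,
      Nat.add_sub_cancel_left]
  have hboltzmann : ∀ v : Fin T → A, ∏ t ∈ Finset.Icc 1 T,
      π t (stateSeq g s₁ (actOf v) t) (actOf v t) = Real.exp (∑ t ∈ Finset.Icc 1 T,
        f (stateSeq g s₁ (actOf v) t) (actOf v t)) / Real.exp (V 1 s₁) := fun v => by
    rw [prod_policy_stateSeq g f T V π hVend hpolicy, Real.exp_sub]
  refine ⟨fun v => ?_, ?_, fun v => hZ ▸ hboltzmann v⟩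
  · rw [hboltzmann v]
    positivity
  · rw [Finset.sum_congr rfl fun v _ => hboltzmann v, ← Finset.sum_div, hZ,
      div_self (Real.exp_pos _).ne']

/-- Lemma 1 of the paper (deterministic dynamics, fixed initial state): the
trajectory distribution induced by the soft-optimal (softmax) policy
`π_t(a|s) = exp (Q_t(s,a) − V_t(s))` is a probability mass function over
action sequences, and it coincides with the maximum-entropy (Boltzmann)
trajectory distribution with energy `−∑_t f(s_t,a_t)`. -/
theorem softmax_policy_is_maxent_traj_distribution {S A : Type*}
    [Fintype S] [Fintype A] [Nonempty S] [Nonempty A]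
    (T : ℕ) (hT : 1 ≤ T) (g : S → A → S) (f : S → A → ℝ)
    (V : ℕ → S → ℝ) (Q : ℕ → S → A → ℝ) (π : ℕ → S → A → ℝ)
    (hVend : ∀ s, V (T + 1) s = 0)
    (hQ : ∀ t, 1 ≤ t → t ≤ T → ∀ s a, Q t s a = f s a + V (t + 1) (g s a))
    (hV : ∀ t, 1 ≤ t → t ≤ T → ∀ s, V t s = Real.log (∑ a, Real.exp (Q t s a)))
    (hπ : ∀ t, 1 ≤ t → t ≤ T → ∀ s a, π t s a = Real.exp (Q t s a - V t s))
    (s₁ : S) :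
    (∀ v : Fin T → A,
        0 ≤ ∏ t ∈ Finset.Icc 1 T,
          π t (stateSeq g s₁ (actOf v) t) (actOf v t)) ∧
    (∑ v : Fin T → A,
        ∏ t ∈ Finset.Icc 1 T,
          π t (stateSeq g s₁ (actOf v) t) (actOf v t)) = 1 ∧
    (∀ v : Fin T → A,
        ∏ t ∈ Finset.Icc 1 T,
          π t (stateSeq g s₁ (actOf v) t) (actOf v t)
          = Real.exp (∑ t ∈ Finset.Icc 1 T,
              f (stateSeq g s₁ (actOf v) t) (actOf v t))
            / ∑ v' : Fin T → A,
                Real.exp (∑ t ∈ Finset.Icc 1 T,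
                  f (stateSeq g s₁ (actOf v') t) (actOf v' t))) :=
  softmax_policy_is_maxent_traj_distribution_general T g f V Q π hVend hQ hV hπ s₁
end

section
/- Let S and A be finite nonempty types, T ≥ 1 a horizon, g : S → A → S a deterministic transition function, and f : S → A → ℝ a reward function. Define V_{T+1}(s) = 0, Q_t(s,a) = f(s,a) + V_{t+1}(g(s,a)), V_t(s) = log ∑_{a∈A} exp(Q_t(s,a)). Fix s₁ ∈ S. For any time-indexed policy μ = (μ_1, …, μ_T), where each μ_t(·|s) is a probability mass function on A for every s ∈ S, the entropy-regularized expected return J(μ) = ∑_{(a₁,…,a_T)∈A^T} ( ∏_{t=1}^T μ_t(a_t|s_t) ) · ( ∑_{t=1}^T ( f(s_t,a_t) − log μ_t(a_t|s_t) ) ) (with states s_{t+1} = g(s_t,a_t) and the convention 0·log 0 = 0) satisfies J(μ) ≤ V₁(s₁), and equality holds for the softmax policy μ_t(a|s) = exp(Q_t(s,a) − V_t(s)). -/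
open BigOperators

/-- The entropy-regularized expected return of a time-indexed policy `μ` in a
finite-horizon deterministic MDP with dynamics `g`, reward `f`, horizon `T`,
and initial state `s₁`:
`J(μ) = ∑_{a₁,…,a_T} (∏_t μ_t(a_t|s_t)) · (∑_t (f(s_t,a_t) − log μ_t(a_t|s_t)))`
(with the convention `0·log 0 = 0`). -/
noncomputable def entRegReturn {S A : Type*} [Fintype A] [Nonempty A]
    (g : S → A → S) (f : S → A → ℝ) (T : ℕ) (s₁ : S) (μ : ℕ → S → A → ℝ) : ℝ :=
  ∑ v : Fin T → A,
    (∏ t ∈ Finset.Icc 1 T,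
        μ t (stateSeq g s₁ (actOf v) t) (actOf v t)) *
      (∑ t ∈ Finset.Icc 1 T,
        (f (stateSeq g s₁ (actOf v) t) (actOf v t)
          - Real.log (μ t (stateSeq g s₁ (actOf v) t) (actOf v t))))

/-!
Dynamic programming with the Gibbs variational principle. The return of a policy satisfies the
backward recursion `J_t(s) = ∑ₐ μ_t(a|s) (f(s,a) - log μ_t(a|s) + J_{t+1}(g s a))`, and for any
distribution `p` on `A` one has `∑ₐ p a (Q a - log p a) ≤ log ∑ₐ exp (Q a)`, with equality at
`p = softmax Q`. Backward induction from `J_{T+1} = V_{T+1} = 0` gives `J_t ≤ V_t`, with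
equality all the way for the softmax policy.
-/

open Finset Real

@[to_additive]
lemma Fin.prod_univ_succ_eq_prod_Icc {M : Type*} [CommMonoid M] (F : ℕ → M) (n : ℕ) :
    ∏ i : Fin n, F i.succ = ∏ k ∈ Icc 1 n, F k := by
  rw [← Ico_add_one_right_eq_Icc, prod_Ico_eq_prod_range, Nat.add_sub_cancel,
    ← Fin.prod_univ_eq_prod_range]
  simp only [Fin.val_succ, add_comm]

lemma Fin.sum_pi_succ {A M : Type*} [Fintype A] [AddCommMonoid M] {n : ℕ}
    (F : (Fin (n + 1) → A) → M) :
    ∑ v, F v = ∑ a, ∑ w : Fin n → A, F (Fin.cons a w) := by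
  rw [← (Fin.consEquiv fun _ => A).sum_comp, Fintype.sum_prod_type]
  rfl

/-- Fenchel–Young inequality for `exp` and its convex conjugate `p ↦ p log p - p`. -/
lemma mul_sub_log_le_exp_sub {p : ℝ} (hp : 0 ≤ p) (x : ℝ) : p * (x - log p) ≤ exp x - p := by
  rcases hp.eq_or_lt with rfl | hp
  · simpa using (exp_pos x).le
  · have h := add_one_le_exp (x - log p)
    rw [exp_sub, exp_log hp, le_div_iff₀ hp] at h
    nlinarith

lemma sum_exp_sub_log_sum_exp {A : Type*} [Fintype A] [Nonempty A] (Q : A → ℝ) :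
    ∑ a, exp (Q a - log (∑ b, exp (Q b))) = 1 := by
  have hZ : 0 < ∑ b, exp (Q b) := sum_pos (fun b _ => exp_pos (Q b)) univ_nonempty
  simp only [exp_sub, exp_log hZ, ← sum_div, div_self hZ.ne']

lemma sum_mul_sub_log_le_log_sum_exp {A : Type*} [Fintype A] [Nonempty A] (p Q : A → ℝ)
    (hp : ∀ a, 0 ≤ p a) (hp_sum : ∑ a, p a = 1) :
    ∑ a, p a * (Q a - log (p a)) ≤ log (∑ a, exp (Q a)) := by
  set L := log (∑ a, exp (Q a))
  have h := sum_le_sum fun a (_ : a ∈ univ) => mul_sub_log_le_exp_sub (hp a) (Q a - L)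
  rw [sum_sub_distrib, sum_exp_sub_log_sum_exp, hp_sum] at h
  have hL : ∑ a, p a * (Q a - L - log (p a)) = ∑ a, p a * (Q a - log (p a)) - L := by
    simp only [mul_sub, sum_sub_distrib, ← sum_mul, hp_sum, one_mul]
    ring
  linarith

lemma sum_softmax_mul_sub_log {A : Type*} [Fintype A] [Nonempty A] (Q : A → ℝ) :
    ∑ a, exp (Q a - log (∑ b, exp (Q b))) * (Q a - log (exp (Q a - log (∑ b, exp (Q b)))))
      = log (∑ a, exp (Q a)) := by
  simp only [log_exp, sub_sub_cancel, ← sum_mul, sum_exp_sub_log_sum_exp, one_mul]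

section Trajectory

variable {S A : Type*} (g : S → A → S)

lemma stateSeq_one (s : S) (a : ℕ → A) : stateSeq g s a 1 = s := rfl

variable [Nonempty A]

lemma actOf_succ {n : ℕ} (v : Fin n → A) (i : Fin n) : actOf v (i + 1) = v i := by
  simp [actOf]

lemma actOf_cons_succ {n : ℕ} (a : A) (w : Fin n → A) (k : ℕ) :
    actOf (Fin.cons a w : Fin (n + 1) → A) (k + 2) = actOf w (k + 1) := by
  simp only [actOf]
  split_ifs <;> first | omega | rfl

lemma stateSeq_cons_succ {n : ℕ} (s : S) (a : A) (w : Fin n → A) (k : ℕ) :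
    stateSeq g s (actOf (Fin.cons a w : Fin (n + 1) → A)) (k + 2)
      = stateSeq g (g s a) (actOf w) (k + 1) := by
  induction k with
  | zero => simp [stateSeq, actOf]
  | succ k ih =>
    change g (stateSeq g s _ (k + 2)) (actOf _ (k + 2)) = g (stateSeq g (g s a) _ (k + 1)) _
    rw [ih, actOf_cons_succ]

lemma trajectory_cons_succ {n : ℕ} (F : ℕ → S → A → ℝ) (t : ℕ) (s : S) (a : A)
    (w : Fin n → A) (i : Fin n) :
    F (i.succ + t) (stateSeq g s (actOf (Fin.cons a w : Fin (n + 1) → A)) (i.succ + 1))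
        ((Fin.cons a w : Fin (n + 1) → A) i.succ)
      = F (i + (t + 1)) (stateSeq g (g s a) (actOf w) (i + 1)) (w i) := by
  rw [Fin.val_succ, stateSeq_cons_succ, Fin.cons_succ, Nat.add_right_comm, add_assoc]

variable [Fintype A]

noncomputable def policyValue (μ r : ℕ → S → A → ℝ) : ℕ → ℕ → S → ℝ
  | 0, _, _ => 0
  | n + 1, t, s => ∑ a, μ t s a * (r t s a + policyValue μ r n (t + 1) (g s a))

/-- The constant `c` lets the induction absorb the first reward into the tail's sum. -/
theorem sum_trajectory_eq_policyValue (μ r : ℕ → S → A → ℝ) (n t : ℕ) (s : S) (c : ℝ)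
    (hμ : ∀ i < n, ∀ s, ∑ a, μ (i + t) s a = 1) :
    ∑ v : Fin n → A,
        (∏ i : Fin n, μ (i + t) (stateSeq g s (actOf v) (i + 1)) (v i)) *
          (c + ∑ i : Fin n, r (i + t) (stateSeq g s (actOf v) (i + 1)) (v i))
      = c + policyValue g μ r n t s := by
  induction n generalizing t s c with
  | zero => simp [policyValue]
  | succ n ih =>
    have hμ_tail : ∀ i < n, ∀ s, ∑ a, μ (i + (t + 1)) s a = 1 := fun i hi s => by
      simpa only [add_assoc, add_comm 1 t] using hμ (i + 1) (by omega) s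
    calc _ = ∑ a, μ t s a * ∑ w : Fin n → A,
          (∏ i : Fin n, μ (i + (t + 1)) (stateSeq g (g s a) (actOf w) (i + 1)) (w i)) *
            ((c + r t s a)
              + ∑ i : Fin n, r (i + (t + 1)) (stateSeq g (g s a) (actOf w) (i + 1)) (w i)) := by
          rw [Fin.sum_pi_succ]
          refine sum_congr rfl fun a _ => ?_
          rw [mul_sum]
          refine sum_congr rfl fun w _ => ?_
          simp only [Fin.prod_univ_succ, Fin.sum_univ_succ, trajectory_cons_succ]
          simp only [Fin.val_zero, zero_add, Fin.cons_zero, stateSeq_one]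
          ring
      _ = ∑ a, μ t s a * (c + (r t s a + policyValue g μ r n (t + 1) (g s a))) := by
          refine sum_congr rfl fun a _ => ?_
          rw [ih (t + 1) (g s a) _ hμ_tail, add_assoc]
      _ = c + policyValue g μ r (n + 1) t s := by
          have hμ_head : ∑ a, μ t s a = 1 := by simpa using hμ 0 n.succ_pos s
          simp only [policyValue, mul_add, sum_add_distrib, ← sum_mul, hμ_head, one_mul]

theorem entRegReturn_eq_policyValue (f : S → A → ℝ) (T : ℕ) (s₁ : S) (μ : ℕ → S → A → ℝ)
    (hμ : ∀ t, 1 ≤ t → t ≤ T → ∀ s, ∑ a, μ t s a = 1) :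
    entRegReturn g f T s₁ μ = policyValue g μ (fun t s a => f s a - log (μ t s a)) T 1 s₁ := by
  rw [← zero_add (policyValue _ _ _ _ _ _),
    ← sum_trajectory_eq_policyValue g _ _ T 1 s₁ 0 fun i hi => hμ (i + 1) (by omega) (by omega)]
  refine sum_congr rfl fun v _ => ?_
  simp only [← Fin.prod_univ_succ_eq_prod_Icc, ← Fin.sum_univ_succ_eq_sum_Icc, Fin.val_succ,
    actOf_succ, zero_add]

end Trajectory

section Bellman

variable {S A : Type*} [Fintype A] [Nonempty A] (g : S → A → S)

variable (f : S → A → ℝ) (T : ℕ) (V : ℕ → S → ℝ) (Q : ℕ → S → A → ℝ)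

theorem policyValue_le_softValue (hVend : ∀ s, V (T + 1) s = 0)
    (hQ : ∀ t, 1 ≤ t → t ≤ T → ∀ s a, Q t s a = f s a + V (t + 1) (g s a))
    (hV : ∀ t, 1 ≤ t → t ≤ T → ∀ s, V t s = log (∑ a, exp (Q t s a)))
    (μ : ℕ → S → A → ℝ)
    (hμ : ∀ t, 1 ≤ t → t ≤ T → ∀ s, (∀ a, 0 ≤ μ t s a) ∧ (∑ a, μ t s a) = 1)
    (n t : ℕ) (s : S) (ht : 1 ≤ t) (htn : t + n = T + 1) :
    policyValue g μ (fun t s a => f s a - log (μ t s a)) n t s ≤ V t s := by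
  induction n generalizing t s with
  | zero => simp [policyValue, show t = T + 1 by omega, hVend]
  | succ n ih =>
    have htT : t ≤ T := by omega
    calc _ = ∑ a, μ t s a * (f s a - log (μ t s a)
          + policyValue g μ (fun t s a => f s a - log (μ t s a)) n (t + 1) (g s a)) := rfl
      _ ≤ ∑ a, μ t s a * (Q t s a - log (μ t s a)) := by
          refine sum_le_sum fun a _ => mul_le_mul_of_nonneg_left ?_ ((hμ t ht htT s).1 a)
          rw [hQ t ht htT s a]
          linarith [ih (t + 1) (g s a) (by omega) (by omega)]
      _ ≤ log (∑ a, exp (Q t s a)) :=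
          sum_mul_sub_log_le_log_sum_exp _ _ (hμ t ht htT s).1 (hμ t ht htT s).2
      _ = V t s := (hV t ht htT s).symm

theorem policyValue_softmax_eq_softValue (hVend : ∀ s, V (T + 1) s = 0)
    (hQ : ∀ t, 1 ≤ t → t ≤ T → ∀ s a, Q t s a = f s a + V (t + 1) (g s a))
    (hV : ∀ t, 1 ≤ t → t ≤ T → ∀ s, V t s = log (∑ a, exp (Q t s a)))
    (n t : ℕ) (s : S) (ht : 1 ≤ t) (htn : t + n = T + 1) :
    policyValue g (fun t s a => exp (Q t s a - V t s))
        (fun t s a => f s a - log (exp (Q t s a - V t s))) n t s = V t s := by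
  induction n generalizing t s with
  | zero => simp [policyValue, show t = T + 1 by omega, hVend]
  | succ n ih =>
    have htT : t ≤ T := by omega
    calc _ = ∑ a, exp (Q t s a - V t s) * (Q t s a - log (exp (Q t s a - V t s))) := by
          refine sum_congr rfl fun a _ => ?_
          rw [ih (t + 1) (g s a) (by omega) (by omega)]
          dsimp only
          congr 1
          linarith [hQ t ht htT s a]
      _ = V t s := by
          rw [hV t ht htT s]
          exact sum_softmax_mul_sub_log _

end Bellman

theorem entropy_regularized_value_optimality_general {S A : Type*}
    [Fintype A] [Nonempty A]
    (T : ℕ) (g : S → A → S) (f : S → A → ℝ)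
    (V : ℕ → S → ℝ) (Q : ℕ → S → A → ℝ)
    (hVend : ∀ s, V (T + 1) s = 0)
    (hQ : ∀ t, 1 ≤ t → t ≤ T → ∀ s a, Q t s a = f s a + V (t + 1) (g s a))
    (hV : ∀ t, 1 ≤ t → t ≤ T → ∀ s, V t s = Real.log (∑ a, Real.exp (Q t s a)))
    (s₁ : S) :
    (∀ μ : ℕ → S → A → ℝ,
      (∀ t, 1 ≤ t → t ≤ T → ∀ s, (∀ a, 0 ≤ μ t s a) ∧ (∑ a, μ t s a) = 1) →
      entRegReturn g f T s₁ μ ≤ V 1 s₁) ∧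
    entRegReturn g f T s₁ (fun t s a => Real.exp (Q t s a - V t s)) = V 1 s₁ := by
  constructor
  · intro μ hμ
    rw [entRegReturn_eq_policyValue g f T s₁ μ fun t ht htT s => (hμ t ht htT s).2]
    exact policyValue_le_softValue g f T V Q hVend hQ hV μ hμ T 1 s₁ le_rfl (add_comm 1 T)
  · have hsoftmax : ∀ t, 1 ≤ t → t ≤ T → ∀ s, ∑ a, exp (Q t s a - V t s) = 1 :=
      fun t ht htT s => by rw [hV t ht htT s]; exact sum_exp_sub_log_sum_exp _
    rw [entRegReturn_eq_policyValue g f T s₁ _ hsoftmax]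
    exact policyValue_softmax_eq_softValue g f T V Q hVend hQ hV T 1 s₁ le_rfl (add_comm 1 T)

/-- Soft-value optimality in a finite-horizon deterministic MDP: every
time-indexed policy `μ` has entropy-regularized expected return
`J(μ) ≤ V₁(s₁)`, and the softmax policy `μ_t(a|s) = exp (Q_t(s,a) − V_t(s))`
attains equality. -/
theorem entropy_regularized_value_optimality {S A : Type*}
    [Fintype S] [Fintype A] [Nonempty S] [Nonempty A]
    (T : ℕ) (hT : 1 ≤ T) (g : S → A → S) (f : S → A → ℝ)
    (V : ℕ → S → ℝ) (Q : ℕ → S → A → ℝ)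
    (hVend : ∀ s, V (T + 1) s = 0)
    (hQ : ∀ t, 1 ≤ t → t ≤ T → ∀ s a, Q t s a = f s a + V (t + 1) (g s a))
    (hV : ∀ t, 1 ≤ t → t ≤ T → ∀ s, V t s = Real.log (∑ a, Real.exp (Q t s a)))
    (s₁ : S) :
    (∀ μ : ℕ → S → A → ℝ,
      (∀ t, 1 ≤ t → t ≤ T → ∀ s, (∀ a, 0 ≤ μ t s a) ∧ (∑ a, μ t s a) = 1) →
      entRegReturn g f T s₁ μ ≤ V 1 s₁) ∧
    entRegReturn g f T s₁ (fun t s a => Real.exp (Q t s a - V t s)) = V 1 s₁ :=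
  entropy_regularized_value_optimality_general T g f V Q hVend hQ hV s₁
end

section
/- Let X be a finite nonempty type, f : ℝ → X → ℝ such that for each x ∈ X the map θ ↦ f(θ, x) is differentiable, and g : X → ℝ an arbitrary function. Define Z(θ) = ∑_{x∈X} exp(f(θ, x)) and p_θ(x) = exp(f(θ, x)) / Z(θ). Then the map θ ↦ ∑_{x∈X} p_θ(x) · g(x) is differentiable, and its derivative at θ equals ∑_{x∈X} p_θ(x) · g(x) · ( (d/dθ f(θ, x)) − ∑_{y∈X} p_θ(y) · (d/dθ f(θ, y)) ). -/
/-! Since `Z'(θ) / Z(θ) = E_{p_θ}[∂f]`, the quotient rule gives the score identity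
`∂p_θ(x) = p_θ(x) (∂f(θ,x) - E_{p_θ}[∂f])`; the theorem follows by linearity of the derivative. -/

open Finset Real

section Gibbs

variable {ι : Type*} (s : Finset ι) {f : ℝ → ι → ℝ} {f' : ι → ℝ} {θ : ℝ}

theorem hasDerivAt_sum_exp (hf : ∀ x ∈ s, HasDerivAt (fun θ => f θ x) (f' x) θ) :
    HasDerivAt (fun θ => ∑ y ∈ s, exp (f θ y)) (∑ y ∈ s, exp (f θ y) * f' y) θ :=
  HasDerivAt.fun_sum fun y hy => (hf y hy).exp

theorem hasDerivAt_exp_div_sum_exp (hf : ∀ x ∈ s, HasDerivAt (fun θ => f θ x) (f' x) θ)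
    {x : ι} (hx : x ∈ s) :
    HasDerivAt (fun θ => exp (f θ x) / ∑ y ∈ s, exp (f θ y))
      ((exp (f θ x) / ∑ y ∈ s, exp (f θ y)) *
        (f' x - ∑ y ∈ s, (exp (f θ y) / ∑ z ∈ s, exp (f θ z)) * f' y)) θ := by
  have hZ : ∑ y ∈ s, exp (f θ y) ≠ 0 := (sum_pos (fun y _ => exp_pos (f θ y)) ⟨x, hx⟩).ne'
  refine ((hf x hx).exp.div (hasDerivAt_sum_exp s hf) hZ).congr_deriv ?_
  simp_rw [div_mul_eq_mul_div _ _ (f' _), ← sum_div]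
  field_simp

theorem hasDerivAt_sum_exp_div_sum_exp_mul (hf : ∀ x ∈ s, HasDerivAt (fun θ => f θ x) (f' x) θ)
    (g : ι → ℝ) :
    HasDerivAt (fun θ => ∑ x ∈ s, (exp (f θ x) / ∑ y ∈ s, exp (f θ y)) * g x)
      (∑ x ∈ s, (exp (f θ x) / ∑ y ∈ s, exp (f θ y)) * g x *
        (f' x - ∑ y ∈ s, (exp (f θ y) / ∑ z ∈ s, exp (f θ z)) * f' y)) θ :=
  (HasDerivAt.fun_sum fun x hx => (hasDerivAt_exp_div_sum_exp s hf hx).mul_const (g x))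
    |>.congr_deriv (sum_congr rfl fun _ _ => mul_right_comm _ _ _)

end Gibbs

theorem deriv_expectation_boltzmann_general {X : Type*} [Fintype X]
    (f : ℝ → X → ℝ) (hf : ∀ x, Differentiable ℝ (fun θ => f θ x)) (g : X → ℝ) :
    Differentiable ℝ
      (fun θ => ∑ x, (Real.exp (f θ x) / ∑ y, Real.exp (f θ y)) * g x) ∧
    ∀ θ : ℝ,
      deriv (fun θ' => ∑ x, (Real.exp (f θ' x) / ∑ y, Real.exp (f θ' y)) * g x) θ
        = ∑ x, (Real.exp (f θ x) / ∑ y, Real.exp (f θ y)) * g x *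
            (deriv (fun θ' => f θ' x) θ
              - ∑ y, (Real.exp (f θ y) / ∑ z, Real.exp (f θ z))
                  * deriv (fun θ' => f θ' y) θ) := by
  have hderiv (θ : ℝ) := hasDerivAt_sum_exp_div_sum_exp_mul univ
    (fun x _ => (hf x θ).hasDerivAt) g
  exact ⟨fun θ => (hderiv θ).differentiableAt, fun θ => (hderiv θ).deriv⟩

/-- Gradient of an expectation under an energy-based model over a finite set
(Lemma 2 of the paper, finite-space version): the derivative of
`θ ↦ E_{p_θ}[g]` equals `E_{p_θ}[g · (∂f/∂θ − E_{p_θ}[∂f/∂θ])]`. -/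
theorem deriv_expectation_boltzmann {X : Type*} [Fintype X] [Nonempty X]
    (f : ℝ → X → ℝ) (hf : ∀ x, Differentiable ℝ (fun θ => f θ x)) (g : X → ℝ) :
    Differentiable ℝ
      (fun θ => ∑ x, (Real.exp (f θ x) / ∑ y, Real.exp (f θ y)) * g x) ∧
    ∀ θ : ℝ,
      deriv (fun θ' => ∑ x, (Real.exp (f θ' x) / ∑ y, Real.exp (f θ' y)) * g x) θ
        = ∑ x, (Real.exp (f θ x) / ∑ y, Real.exp (f θ y)) * g x *
            (deriv (fun θ' => f θ' x) θ
              - ∑ y, (Real.exp (f θ y) / ∑ z, Real.exp (f θ z))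
                  * deriv (fun θ' => f θ' y) θ) :=
  deriv_expectation_boltzmann_general f hf g
end
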